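/- arXiv:quant-ph/0405192 — 3 statements merged into one kernel-verified Lean document; each statement's English description precedes it below -/
import Mathlib

section
/- Let ν = N/M be rational with N, M coprime positive integers, N < M, and let R_ν be the rotation R_ν(x) = x + 2πν (mod 2π) on [0,2π). For the equi-partition of [0,2π) into M intervals B_k = [2π(k-1)/M, 2πk/M), k = 1,…,M, the entropic chaos degree vanishes: D = Σ_{i,j} p_{ij} log(p_i / p_{ij}) = 0, where p_i = λ(B_i)/(2π) and p_{ij} = λ(B_i ∩ R_ν⁻¹(B_j))/(2π). -/
open MeasureTheory Real

/-- The rotation `R_ν(x) = x + 2πν (mod 2π)` on `[0, 2π)`. -/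
noncomputable def rot (ν x : ℝ) : ℝ :=
  2 * π * Int.fract ((x + 2 * π * ν) / (2 * π))

/-- The `k`-th cell `B_k = [2πk/M, 2π(k+1)/M)` (0-based) of the equi-partition of `[0,2π)`
into `M` intervals. -/
noncomputable def cell (M : ℕ) (k : Fin M) : Set ℝ :=
  Set.Ico (2 * π * ((k : ℕ) : ℝ) / M) (2 * π * (((k : ℕ) : ℝ) + 1) / M)

/-- The cell probability `p_i = λ(B_i)/(2π)`. -/
noncomputable def pC (M : ℕ) (i : Fin M) : ℝ :=
  (volume (cell M i)).toReal / (2 * π)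

/-- The joint probability `p_{ij} = λ(B_i ∩ R_ν⁻¹(B_j))/(2π)`. -/
noncomputable def pJ (ν : ℝ) (M : ℕ) (i j : Fin M) : ℝ :=
  (volume (cell M i ∩ rot ν ⁻¹' cell M j)).toReal / (2 * π)

/-!
Rotation by `N/M` carries each cell of the equi-partition into a single cell: in the
coordinate `⌊x M / 2π⌋` it acts as `k ↦ (k + N) mod M`. Hence every joint probability `p_ij`
is either `p_i` or `0`, and each term `p_ij log (p_i / p_ij)` of the chaos degree vanishes.
-/

lemma Int.floor_natCast_mul_fract_div_natCast (s : ℝ) {M : ℕ} (hM : M ≠ 0) :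
    ⌊M * Int.fract (s / M)⌋ = ⌊s⌋ % M := by
  have hM' : (M : ℝ) ≠ 0 := Nat.cast_ne_zero.mpr hM
  rw [Int.fract, mul_sub, mul_div_cancel₀ s hM', Int.floor_div_natCast,
    show (M : ℝ) * ((⌊s⌋ / M : ℤ) : ℝ) = ((M * (⌊s⌋ / M) : ℤ) : ℝ) by push_cast; ring,
    Int.floor_sub_intCast, Int.emod_def]

lemma mem_cell_iff {M : ℕ} (k : Fin M) (x : ℝ) :
    x ∈ cell M k ↔ ⌊x * M / (2 * π)⌋ = (k : ℕ) := by
  have hM : (0 : ℝ) < M := Nat.cast_pos.mpr k.pos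
  rw [cell, Set.mem_Ico, Int.floor_eq_iff, le_div_iff₀ (by positivity),
    div_lt_iff₀ (by positivity), div_le_iff₀ hM, lt_div_iff₀ hM]
  push_cast
  constructor <;> rintro ⟨h₁, h₂⟩ <;> constructor <;> linarith

lemma floor_rot_mul_div (N : ℕ) {M : ℕ} (hM : M ≠ 0) (x : ℝ) :
    ⌊rot ((N : ℝ) / M) x * M / (2 * π)⌋ = (⌊x * M / (2 * π)⌋ + N) % M := by
  have hM' : (M : ℝ) ≠ 0 := Nat.cast_ne_zero.mpr hM
  have key : rot ((N : ℝ) / M) x * M / (2 * π)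
      = M * Int.fract ((x * M / (2 * π) + N) / M) := by
    rw [rot]
    field_simp
  rw [key, Int.floor_natCast_mul_fract_div_natCast _ hM, Int.floor_add_natCast]

lemma cell_inter_preimage_rot (N : ℕ) {M : ℕ} (i j : Fin M) :
    cell M i ∩ rot ((N : ℝ) / M) ⁻¹' cell M j =
      if (j : ℕ) = (i + N) % M then cell M i else ∅ := by
  ext x
  rw [Set.mem_inter_iff, Set.mem_preimage, mem_cell_iff, mem_cell_iff,
    floor_rot_mul_div N i.pos.ne']
  split_ifs with h
  · rw [mem_cell_iff, h]
    push_cast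
    exact ⟨And.left, fun hx ↦ ⟨hx, by rw [hx]⟩⟩
  · rw [Set.mem_empty_iff_false, iff_false, not_and]
    intro hx hj
    rw [hx] at hj
    exact h (by exact_mod_cast hj.symm)

lemma pJ_rot_eq_ite (N : ℕ) {M : ℕ} (i j : Fin M) :
    pJ ((N : ℝ) / M) M i j = if (j : ℕ) = (i + N) % M then pC M i else 0 := by
  rw [pJ, cell_inter_preimage_rot]
  split_ifs <;> simp [pC]

theorem ecd_rational_rotation_equipartition_eq_zero_general
    (N M : ℕ) :
    ∑ i : Fin M, ∑ j : Fin M,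
      pJ ((N : ℝ) / M) M i j * Real.log (pC M i / pJ ((N : ℝ) / M) M i j) = 0 := by
  refine Finset.sum_eq_zero fun i _ ↦ Finset.sum_eq_zero fun j _ ↦ ?_
  rw [pJ_rot_eq_ite]
  -- `log (p / p) = 0` also at `p = 0`, via `0 / 0 = 0` and `log 0 = 0`.
  split_ifs <;> simp

/-- Theorem 4.1(1): for a rational rotation `ν = N/M` (with `N, M` coprime, `0 < N < M`)
and the equi-partition of `[0,2π)` into `M` intervals, the entropic chaos degree
`D = Σ_{i,j} p_{ij} log(p_i / p_{ij})` vanishes. -/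
theorem ecd_rational_rotation_equipartition_eq_zero
    (N M : ℕ) (hN : 0 < N) (hNM : N < M) (hcop : Nat.Coprime N M) :
    ∑ i : Fin M, ∑ j : Fin M,
      pJ ((N : ℝ) / M) M i j * Real.log (pC M i / pJ ((N : ℝ) / M) M i j) = 0 :=
  ecd_rational_rotation_equipartition_eq_zero_general N M
end

section
/- Let ν be irrational and R_ν(x) = x + 2πν (mod 2π) the rotation of [0,2π). For every finite measurable partition {B_1,…,B_L} of [0,2π) with L ≥ 2 and λ(B_i) > 0 for all i, the entropic chaos degree is strictly positive: D = Σ_{i,j} p_{ij} log(p_i / p_{ij}) > 0, where p_i = λ(B_i)/(2π) and p_{ij} = λ(B_i ∩ R_ν⁻¹(B_j))/(2π). -/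
/-!
If no cell `B_i` is split by the rotation, i.e. every `B_i ∩ R⁻¹ B_j` is null or all of `B_i`,
then each cell is carried a.e. into a single cell `B_{σ i}`. A periodic point `i₀` of `σ`, of
period `k`, gives a set `B_{i₀}` that is a.e. invariant under `R^k`, a rotation of infinite
order, hence ergodic; so `B_{i₀}` is null or conull, which is impossible when there are two
cells of positive measure. A split cell `0 < p_{ij} < p_i` contributes a positive term to `D`,
and every other term is nonnegative since `p_{ij} ≤ p_i`.
-/

open MeasureTheory Real

open Set Function

theorem Function.exists_isPeriodicPt_of_finite {α : Type*} [Finite α] (f : α → α) (x : α) :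
    ∃ y n, 0 < n ∧ IsPeriodicPt f n y := by
  obtain ⟨m, n, hmn, h⟩ := Finite.exists_ne_map_eq_of_infinite fun n : ℕ => f^[n] x
  wlog hlt : m < n generalizing m n
  · exact this n m hmn.symm h.symm (hmn.lt_or_gt.resolve_left hlt)
  refine ⟨f^[m] x, n - m, Nat.sub_pos_of_lt hlt, ?_⟩
  rw [IsPeriodicPt, IsFixedPt, ← iterate_add_apply, Nat.sub_add_cancel hlt.le, h]

theorem mul_log_div_nonneg {x y : ℝ} (hx : 0 ≤ x) (hxy : x ≤ y) : 0 ≤ x * log (y / x) := by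
  rcases hx.eq_or_lt with rfl | hx
  · simp
  · exact mul_nonneg hx.le (log_nonneg ((one_le_div hx).mpr hxy))

theorem mul_log_div_pos {x y : ℝ} (hx : 0 < x) (hxy : x < y) : 0 < x * log (y / x) :=
  mul_pos hx (log_pos ((one_lt_div hx).mpr hxy))

theorem sum_sum_mul_log_div_pos {ι κ : Type*} [Fintype ι] [Fintype κ] (x : ι → κ → ℝ) (y : ι → ℝ)
    (hx : ∀ i j, 0 ≤ x i j) (hxy : ∀ i j, x i j ≤ y i) (h : ∃ i j, 0 < x i j ∧ x i j < y i) :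
    0 < ∑ i, ∑ j, x i j * log (y i / x i j) := by
  obtain ⟨i, j, hpos, hlt⟩ := h
  have hterm i j : 0 ≤ x i j * log (y i / x i j) := mul_log_div_nonneg (hx i j) (hxy i j)
  exact Finset.sum_pos' (fun i _ => Finset.sum_nonneg fun j _ => hterm i j)
    ⟨i, Finset.mem_univ _, Finset.sum_pos' (fun j _ => hterm i j)
      ⟨j, Finset.mem_univ _, mul_log_div_pos hpos hlt⟩⟩

section Partition

variable {α ι : Type*} [MeasurableSpace α] {μ : Measure α} {f : α → α} {B : ι → Set α}

theorem exists_ae_le_preimage_of_not_split [IsFiniteMeasure μ] [Countable ι]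
    (hf : Measure.QuasiMeasurePreserving f μ μ)
    (hB : ∀ j, MeasurableSet (B j)) (hcover : ∀ᵐ x ∂μ, x ∈ ⋃ j, B j) {i : ι}
    (hi : μ (B i) ≠ 0) (hsplit : ∀ j, 0 < μ (B i ∩ f ⁻¹' B j) → μ (B i) ≤ μ (B i ∩ f ⁻¹' B j)) :
    ∃ j, B i ≤ᵐ[μ] f ⁻¹' B j := by
  have hcover' : B i ≤ᵐ[μ] ⋃ j, B i ∩ f ⁻¹' B j := by
    filter_upwards [hf.ae hcover] with x hx hxi
    simp only [mem_iUnion] at hx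
    exact mem_iUnion.mpr (hx.imp fun j hj => ⟨hxi, hj⟩)
  obtain ⟨j, hj⟩ : ∃ j, μ (B i ∩ f ⁻¹' B j) ≠ 0 := by
    by_contra! h
    exact hi (measure_mono_null_ae hcover' (measure_iUnion_null h))
  have heq : (B i ∩ f ⁻¹' B j : Set α) =ᵐ[μ] B i :=
    ae_eq_of_subset_of_measure_ge inter_subset_left (hsplit j (pos_iff_ne_zero.mpr hj))
      ((hB i).inter (hf.measurable (hB j))).nullMeasurableSet (measure_ne_top _ _)
  exact ⟨j, heq.symm.le.trans inter_subset_right.eventuallyLE⟩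

theorem ae_le_preimage_iterate (hf : Measure.QuasiMeasurePreserving f μ μ) {σ : ι → ι}
    (h : ∀ i, B i ≤ᵐ[μ] f ⁻¹' B (σ i)) (n : ℕ) (i : ι) :
    B i ≤ᵐ[μ] f^[n] ⁻¹' B (σ^[n] i) := by
  induction n generalizing i with
  | zero => rfl
  | succ n ih =>
    rw [iterate_succ, iterate_succ_apply, preimage_comp]
    exact (h i).trans (hf.preimage_mono_ae (ih (σ i)))

theorem exists_measure_inter_preimage_pos_lt [IsFiniteMeasure μ] [Finite ι] [Nontrivial ι]
    (hf : ∀ k, 0 < k → Ergodic f^[k] μ) (hB : ∀ i, MeasurableSet (B i))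
    (hdisj : Pairwise (Disjoint on B)) (hcover : ∀ᵐ x ∂μ, x ∈ ⋃ i, B i)
    (hpos : ∀ i, μ (B i) ≠ 0) :
    ∃ i j, 0 < μ (B i ∩ f ⁻¹' B j) ∧ μ (B i ∩ f ⁻¹' B j) < μ (B i) := by
  by_contra! hsplit
  have hqmp : Measure.QuasiMeasurePreserving f μ μ := (hf 1 one_pos).quasiMeasurePreserving
  choose σ hσ using fun i =>
    exists_ae_le_preimage_of_not_split hqmp hB hcover (hpos i) (hsplit i)
  obtain ⟨i₀, k, hk, hper⟩ := Function.exists_isPeriodicPt_of_finite σ (Classical.arbitrary ι)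
  have hinv : B i₀ ≤ᵐ[μ] f^[k] ⁻¹' B i₀ := by
    simpa only [hper.eq] using ae_le_preimage_iterate hqmp hσ k i₀
  rcases (hf k hk).ae_empty_or_univ_of_ae_le_preimage' (hB i₀).nullMeasurableSet hinv
    (measure_ne_top _ _) with h | h
  · exact hpos i₀ (ae_eq_empty.mp h)
  · obtain ⟨j, hj⟩ := exists_ne i₀
    exact hpos j (measure_mono_null (hdisj hj).subset_compl_right (ae_eq_univ.mp h))

end Partition

instance fact_two_pi_pos : Fact (0 < 2 * π) := ⟨two_pi_pos⟩

namespace AddCircle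

variable (T : ℝ) [Fact (0 < T)]

theorem measurePreserving_coe_restrict_Ico (t : ℝ) :
    MeasurePreserving ((↑) : ℝ → AddCircle T) (volume.restrict (Ico t (t + T))) volume := by
  rw [Measure.restrict_congr_set Ico_ae_eq_Ioc]
  exact AddCircle.measurePreserving_mk T t

theorem measurePreserving_coe_equivIco (t : ℝ) :
    MeasurePreserving (fun z : AddCircle T => (equivIco T t z : ℝ)) volume
      (volume.restrict (Ico t (t + T))) := by
  have hmeas : Measurable fun z : AddCircle T => (equivIco T t z : ℝ) :=
    measurable_subtype_coe.comp (measurableEquivIco T t).measurable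
  refine ⟨hmeas, ?_⟩
  rw [← (measurePreserving_coe_restrict_Ico T t).map_eq,
    Measure.map_map hmeas AddCircle.measurable_mk']
  conv_rhs => rw [← Measure.map_id (μ := volume.restrict (Ico t (t + T)))]
  refine Measure.map_congr ?_
  filter_upwards [ae_restrict_mem measurableSet_Ico] with x hx
  exact equivIco_coe_of_mem hx

end AddCircle

theorem rot_eq_equivIco (ν x : ℝ) :
    rot ν x = AddCircle.equivIco (2 * π) 0 ((x : AddCircle (2 * π)) + (2 * π * ν : ℝ)) := by
  rw [← AddCircle.coe_add, AddCircle.coe_equivIco_mk_apply, rot, mul_comm]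

theorem measurable_rot (ν : ℝ) : Measurable (rot ν) := by
  unfold rot; fun_prop

theorem semiconj_rot (ν : ℝ) :
    Semiconj (fun z : AddCircle (2 * π) => (AddCircle.equivIco (2 * π) 0 z : ℝ))
      (· + (2 * π * ν : ℝ)) (rot ν) := by
  intro z
  rw [rot_eq_equivIco, AddCircle.coe_equivIco]

theorem addOrderOf_coe_mul_eq_zero {T ν : ℝ} [Fact (0 < T)] (hν : Irrational ν) :
    addOrderOf ((T * ν : ℝ) : AddCircle T) = 0 := by
  rw [← AddCircle.denseRange_zsmul_iff, AddCircle.denseRange_zsmul_coe_iff,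
    mul_div_cancel_left₀ _ (Fact.out : 0 < T).ne']
  exact hν

theorem ergodic_iterate_rot {ν : ℝ} (hν : Irrational ν) {k : ℕ} (hk : 0 < k) :
    Ergodic (rot ν)^[k] (volume.restrict (Ico 0 (2 * π))) := by
  have hmp : MeasurePreserving (fun z : AddCircle (2 * π) => (AddCircle.equivIco (2 * π) 0 z : ℝ))
      volume (volume.restrict (Ico 0 (2 * π))) := by
    simpa only [zero_add] using AddCircle.measurePreserving_coe_equivIco (2 * π) 0
  have hsemi := (semiconj_rot ν).iterate_right k
  rw [add_right_iterate] at hsemi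
  refine hmp.ergodic_of_ergodic_semiconj (AddCircle.ergodic_add_right.mpr ?_)
    ((measurable_rot ν).iterate k) hsemi
  rw [addOrderOf_nsmul' _ hk.ne', addOrderOf_coe_mul_eq_zero hν, Nat.zero_div]

/-- Theorem 4.1(2): for an irrational rotation `R_ν` and any finite measurable partition
`{B_1,…,B_L}` of `[0,2π)` with `L ≥ 2` and all cells of positive measure, the entropic
chaos degree `D = Σ_{i,j} p_{ij} log(p_i / p_{ij})` is strictly positive, where
`p_i = λ(B_i)/(2π)` and `p_{ij} = λ(B_i ∩ R_ν⁻¹(B_j))/(2π)`. -/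
theorem ecd_irrational_rotation_pos
    (ν : ℝ) (hν : Irrational ν) (L : ℕ) (hL : 2 ≤ L) (B : Fin L → Set ℝ)
    (hmeas : ∀ i, MeasurableSet (B i))
    (hdisj : ∀ i j, i ≠ j → Disjoint (B i) (B j))
    (hcover : (⋃ i, B i) = Set.Ico 0 (2 * π))
    (hpos : ∀ i, 0 < volume (B i)) :
    0 < ∑ i : Fin L, ∑ j : Fin L,
        (volume (B i ∩ rot ν ⁻¹' B j)).toReal / (2 * π) *
          Real.log (((volume (B i)).toReal / (2 * π)) /
            ((volume (B i ∩ rot ν ⁻¹' B j)).toReal / (2 * π))) := by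
  have hμ {s : Set ℝ} (hs : s ⊆ Ico 0 (2 * π)) : volume.restrict (Ico 0 (2 * π)) s = volume s :=
    Measure.restrict_eq_self _ hs
  have hBsub i : B i ⊆ Ico 0 (2 * π) := hcover ▸ subset_iUnion B i
  have hfin i : volume (B i) ≠ ⊤ := hμ (hBsub i) ▸ measure_ne_top _ _
  have : Nontrivial (Fin L) := Fin.nontrivial_iff_two_le.mpr hL
  obtain ⟨i, j, hpos_ij, hlt_ij⟩ := exists_measure_inter_preimage_pos_lt
    (fun k hk => ergodic_iterate_rot hν hk) hmeas hdisj
    (by rw [hcover]; exact ae_restrict_mem measurableSet_Ico) (fun i => hμ (hBsub i) ▸ (hpos i).ne')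
  rw [hμ (inter_subset_left.trans (hBsub i))] at hpos_ij hlt_ij
  rw [hμ (hBsub i)] at hlt_ij
  refine sum_sum_mul_log_div_pos _ _ (fun i j => by positivity) (fun i j => ?_) ⟨i, j, ?_, ?_⟩
  · gcongr
    exacts [hfin i, inter_subset_left]
  · exact div_pos (ENNReal.toReal_pos hpos_ij.ne' hlt_ij.ne_top) two_pi_pos
  · exact div_lt_div_of_pos_right (ENNReal.toReal_strict_mono (hfin i) hlt_ij) two_pi_pos
end

section
/- Let ν be irrational. For each positive integer l let D_l = −s_l log s_l − (1−s_l) log(1−s_l) with s_l = lν − ⌊lν⌋ be the entropic chaos degree of the rotation R_ν(x) = x + 2πν (mod 2π) with respect to the equi-partition of [0,2π) into l intervals of equal length. Then the infimum over all equi-partitions vanishes: inf { D_l : l ∈ ℕ, l ≥ 1 } = 0 (while each D_l > 0). -/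
open Real

/-- The binary (Shannon) entropy `H(s) = −s log s − (1−s) log(1−s)` (natural log,
convention `0 · log 0 = 0`). -/
noncomputable def binEnt (s : ℝ) : ℝ :=
  -s * Real.log s - (1 - s) * Real.log (1 - s)

/-!
The entropy `H ∘ fract` is a continuous function on `ℝ` vanishing at the integers, because
`H 0 = H 1 = 0`. By Dirichlet's approximation theorem some multiple `lν` lies within
`1 / (n + 1)` of an integer, so `H (fract (lν))` can be made arbitrarily small, while for
irrational `ν` it is never `0`, as `fract (lν)` lies strictly between `0` and `1`.
-/

open Filter Topology

lemma binEnt_eq_negMulLog_add (s : ℝ) : binEnt s = negMulLog s + negMulLog (1 - s) := by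
  simp only [binEnt, negMulLog]
  ring

lemma continuous_binEnt : Continuous binEnt := by
  simp only [funext binEnt_eq_negMulLog_add]
  fun_prop

@[simp] lemma binEnt_zero : binEnt 0 = 0 := by simp [binEnt]

@[simp] lemma binEnt_one : binEnt 1 = 0 := by simp [binEnt]

lemma binEnt_pos {s : ℝ} (h0 : 0 < s) (h1 : s < 1) : 0 < binEnt s := by
  have hs : s * log s < 0 := mul_neg_of_pos_of_neg h0 (log_neg h0 h1)
  have hs' : (1 - s) * log (1 - s) < 0 :=
    mul_neg_of_pos_of_neg (by linarith) (log_neg (by linarith) (by linarith))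
  simp only [binEnt, neg_mul]
  linarith

lemma continuous_binEnt_fract : Continuous fun x : ℝ ↦ binEnt (Int.fract x) :=
  continuous_binEnt.continuousOn.comp_fract'' (by simp)

lemma Irrational.binEnt_fract_pos {x : ℝ} (hx : Irrational x) : 0 < binEnt (Int.fract x) :=
  binEnt_pos (Int.fract_pos.mpr (hx.ne_int _)) (Int.fract_lt_one x)

lemma exists_tendsto_binEnt_fract_nat_mul (ν : ℝ) :
    ∃ l : ℕ → ℕ, (∀ n, 1 ≤ l n) ∧
      Tendsto (fun n ↦ binEnt (Int.fract (l n * ν))) atTop (𝓝 0) := by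
  choose l hl_pos _ hl_approx using
    fun n : ℕ ↦ Real.exists_nat_abs_mul_sub_round_le ν n.succ_pos
  set e : ℕ → ℝ := fun n ↦ l n * ν - round (l n * ν)
  have he : Tendsto e atTop (𝓝 0) :=
    squeeze_zero_norm (fun n ↦ (hl_approx n).trans (by gcongr; linarith))
      tendsto_one_div_add_atTop_nhds_zero_nat
  have hlim := (continuous_binEnt_fract.tendsto 0).comp he
  simp only [Int.fract_zero, binEnt_zero] at hlim
  refine ⟨l, hl_pos, hlim.congr fun n ↦ ?_⟩
  simp [e, Int.fract_sub_intCast]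

/-- Proposition 4.1: for irrational `ν`, the entropic chaos degree of the rotation
`R_ν(x) = x + 2πν (mod 2π)` with respect to the equi-partition of `[0,2π)` into `l`
intervals is `D_l = H(lν − ⌊lν⌋)`; the infimum of `D_l` over all equi-partition sizes
`l ≥ 1` is `0`, although each `D_l` is strictly positive. -/
theorem inf_ecd_equipartitions_eq_zero (ν : ℝ) (hν : Irrational ν) :
    sInf {d : ℝ | ∃ l : ℕ, 1 ≤ l ∧ d = binEnt (Int.fract ((l : ℝ) * ν))} = 0 ∧
      ∀ l : ℕ, 1 ≤ l → 0 < binEnt (Int.fract ((l : ℝ) * ν)) := by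
  have hpos : ∀ l : ℕ, 1 ≤ l → 0 < binEnt (Int.fract ((l : ℝ) * ν)) :=
    fun l hl ↦ (hν.natCast_mul (by omega)).binEnt_fract_pos
  have hnonneg : ∀ d ∈ {d : ℝ | ∃ l : ℕ, 1 ≤ l ∧ d = binEnt (Int.fract ((l : ℝ) * ν))}, 0 ≤ d := by
    rintro _ ⟨l, hl, rfl⟩
    exact (hpos l hl).le
  obtain ⟨l, hl, hlim⟩ := exists_tendsto_binEnt_fract_nat_mul ν
  refine ⟨le_antisymm ?_ (Real.sInf_nonneg hnonneg), hpos⟩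
  exact ge_of_tendsto' hlim fun n ↦ csInf_le ⟨0, hnonneg⟩ ⟨l n, hl n, rfl⟩
end
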